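/- Assume φ₋ > φ₊, so that ρ₋ > ρ₊. The function 𝒟(r) = −√(G(r))/F'(r) is Lipschitz continuous on [ρ₊, ρ₋]. More precisely, 𝒟 is differentiable on (ρ₊, ρ₋], has a one-sided (right) derivative at ρ₊ equal to −√((b·F'(ρ₊) − a)/F'(ρ₊)), and lim_{r → ρ₊⁺} 𝒟'(r) = −√((b·F'(ρ₊) − a)/F'(ρ₊)), so that 𝒟' extends to a continuous (hence bounded) function on [ρ₊, ρ₋]. -/

import Mathlib

/-!
On `(ρ₊, ∞)` both `G` and `F'` are positive, so `𝒟 = -√G / F'` is differentiable there with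
`𝒟' = -H / √G + √G F'' / F'²`. As `r → ρ₊⁺` the second term vanishes with `G`. Since
`H(ρ₊) = G(ρ₊) = 0` and `G' = 2 F' H`, l'Hôpital's rule for `H² / G` gives
`H² / G → (b F'(ρ₊) - a) / F'(ρ₊)`, which yields the limit of `𝒟'`. As `𝒟` is continuous at
`ρ₊`, this limit is also its right derivative there, and a derivative that is continuous on the
compact interval `[ρ₊, ρ₋]` is bounded, so `𝒟` is Lipschitz by the mean value theorem.
-/

open MeasureTheory Set Filter Topology

noncomputable section

/-- `F(s) = ∫_{ρ₊}^s p'(τ)/(μ τ) dτ`. -/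
def Ffun (p : ℝ → ℝ) (μ ρp s : ℝ) : ℝ :=
  ∫ τ in ρp..s, deriv p τ / (μ * τ)

/-- `H(s) = b F(s) + b φ₊ - a s`. -/
def Hfun (p : ℝ → ℝ) (μ a b ρp φp s : ℝ) : ℝ :=
  b * Ffun p μ ρp s + b * φp - a * s

/-- `G(s) = ∫_{ρ₊}^s 2 F'(τ) H(τ) dτ`. -/
def Gfun (p : ℝ → ℝ) (μ a b ρp φp s : ℝ) : ℝ :=
  ∫ τ in ρp..s, 2 * (deriv p τ / (μ * τ)) * Hfun p μ a b ρp φp τ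

/-- `𝒟(r) = -√(G(r)) / F'(r)` with `F'(r) = p'(r)/(μ r)`. -/
def Dfun (p : ℝ → ℝ) (μ a b ρp φp r : ℝ) : ℝ :=
  - Real.sqrt (Gfun p μ a b ρp φp r) / (deriv p r / (μ * r))

/-- The structural condition `φ₋ - φ₊ + ∫₀^{ρ₊} p'(s)/(μ s) ds > 0`. -/
def CondPlus (p : ℝ → ℝ) (μ ρp φp φm : ℝ) : Prop :=
  ¬ IntegrableOn (fun s => deriv p s / (μ * s)) (Set.Ioo 0 ρp) ∨
    0 < φm - φp + ∫ s in Set.Ioo 0 ρp, deriv p s / (μ * s)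

theorem hasDerivAt_integral_of_continuousOn {g : ℝ → ℝ} {s : Set ℝ} {c x : ℝ} (hs : IsOpen s)
    (hs' : s.OrdConnected) (hg : ContinuousOn g s) (hc : c ∈ s) (hx : x ∈ s) :
    HasDerivAt (fun y => ∫ t in c..y, g t) (g x) x :=
  intervalIntegral.integral_hasDerivAt_right
    ((hg.mono (hs'.uIcc_subset hc hx)).intervalIntegrable)
    (hg.stronglyMeasurableAtFilter hs x hx) (hg.continuousAt (hs.mem_nhds hx))

theorem strictMonoOn_of_hasDerivAt_pos {D : Set ℝ} (hD : Convex ℝ D) {φ φ' : ℝ → ℝ}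
    (hφ : ∀ x ∈ D, HasDerivAt φ (φ' x) x) (hφ' : ∀ x ∈ interior D, 0 < φ' x) :
    StrictMonoOn φ D :=
  strictMonoOn_of_hasDerivWithinAt_pos hD
    (fun x hx => (hφ x hx).continuousAt.continuousWithinAt)
    (fun x hx => (hφ x (interior_subset hx)).hasDerivWithinAt) hφ'

theorem pos_of_hasDerivAt_pos {φ φ' : ℝ → ℝ} {c x : ℝ}
    (hφ : ∀ y ∈ Ici c, HasDerivAt φ (φ' y) y) (hφ' : ∀ y ∈ Ioi c, 0 < φ' y) (hc : φ c = 0)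
    (hx : c < x) : 0 < φ x := by
  have hmono := strictMonoOn_of_hasDerivAt_pos (convex_Ici c) hφ (by rwa [interior_Ici])
  simpa [hc] using hmono (mem_Ici.2 le_rfl) hx.le hx

/-- If `G' = 2 f h`, the factor `f` cancels in the derivative of `√G`. -/
theorem HasDerivAt.neg_sqrt_div {f G : ℝ → ℝ} {f' h x : ℝ} (hG : HasDerivAt G (2 * f x * h) x)
    (hf : HasDerivAt f f' x) (hGx : 0 < G x) (hfx : f x ≠ 0) :
    HasDerivAt (fun r => -√(G r) / f r) (-(h / √(G x)) + √(G x) * f' / f x ^ 2) x := by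
  refine ((hG.sqrt hGx.ne').neg.div hf hfx).congr_deriv ?_
  have : √(G x) ≠ 0 := (Real.sqrt_pos.mpr hGx).ne'
  simp only [Pi.neg_apply]
  field_simp
  ring

/-- L'Hôpital's rule applied to `H² / G`, whose derivative quotient is `H' / f`. -/
theorem tendsto_div_sqrt_of_hasDerivAt {f H G H' : ℝ → ℝ} {c d : ℝ} (hcd : c < d)
    (hH : ∀ x ∈ Ico c d, HasDerivAt H (H' x) x)
    (hG : ∀ x ∈ Ico c d, HasDerivAt G (2 * f x * H x) x) (hHc : H c = 0) (hGc : G c = 0)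
    (hHpos : ∀ x ∈ Ioo c d, 0 < H x) (hfpos : ∀ x ∈ Ioo c d, 0 < f x)
    (hH' : ContinuousAt H' c) (hf : ContinuousAt f c) (hfc : f c ≠ 0) :
    Tendsto (fun x => H x / √(G x)) (𝓝[>] c) (𝓝 √(H' c / f c)) := by
  have hquot : Tendsto (fun x => 2 * H x * H' x / (2 * f x * H x)) (𝓝[>] c)
      (𝓝 (H' c / f c)) := by
    refine ((hH'.div hf hfc).tendsto.mono_left nhdsWithin_le_nhds).congr' ?_
    filter_upwards [Ioo_mem_nhdsGT hcd] with x hx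
    have := (hHpos x hx).ne'
    have := (hfpos x hx).ne'
    simp only [Pi.div_apply]
    field_simp
  have hsq : Tendsto (fun x => H x ^ 2 / G x) (𝓝[>] c) (𝓝 (H' c / f c)) := by
    refine HasDerivAt.lhopital_zero_right_on_Ico hcd (fun x hx => ?_)
      (fun x hx => hG x (Ioo_subset_Ico_self hx))
      (fun x hx => ((hH x hx).continuousAt.pow 2).continuousWithinAt)
      (fun x hx => (hG x hx).continuousAt.continuousWithinAt)
      (fun x hx => (mul_pos (mul_pos two_pos (hfpos x hx)) (hHpos x hx)).ne')
      (by simp [hHc]) hGc hquot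
    exact ((hH x (Ioo_subset_Ico_self hx)).fun_pow 2).congr_deriv (by ring)
  refine (hsq.sqrt).congr' ?_
  filter_upwards [Ioo_mem_nhdsGT hcd] with x hx
  rw [Real.sqrt_div (sq_nonneg _), Real.sqrt_sq (hHpos x hx).le]

theorem continuousOn_update_Icc_of_tendsto {E : ℝ → ℝ} {c d L : ℝ} (hE : ContinuousOn E (Ioc c d))
    (hL : Tendsto E (𝓝[>] c) (𝓝 L)) : ContinuousOn (Function.update E c L) (Icc c d) := by
  intro x hx
  rcases hx.1.eq_or_lt with rfl | hcx
  · rw [continuousWithinAt_update_same, Icc_sdiff_left]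
    exact hL.mono_left (nhdsWithin_mono _ Ioc_subset_Ioi_self)
  · rw [continuousWithinAt_update_of_ne hcx.ne']
    refine (hE x ⟨hcx, hx.2⟩).mono_of_mem_nhdsWithin ?_
    exact mem_nhdsWithin.2 ⟨Ioi c, isOpen_Ioi, hcx, fun y hy => ⟨hy.1, hy.2.2⟩⟩

theorem exists_lipschitzOnWith_of_hasDerivWithinAt {f f' : ℝ → ℝ} {s : Set ℝ} (hs : Convex ℝ s)
    (hs' : IsCompact s) (hf : ∀ x ∈ s, HasDerivWithinAt f (f' x) s x)
    (hf' : ContinuousOn f' s) : ∃ K : NNReal, LipschitzOnWith K f s := by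
  obtain ⟨C, hC⟩ := hs'.exists_bound_of_continuousOn hf'
  refine ⟨C.toNNReal, hs.lipschitzOnWith_of_nnnorm_hasDerivWithin_le hf fun x hx => ?_⟩
  rw [← NNReal.coe_le_coe, coe_nnnorm, Real.coe_toNNReal']
  exact (hC x hx).trans (le_max_left _ _)

/-- `F'`, the integrand of `Ffun`. -/
def Fderiv (p : ℝ → ℝ) (μ s : ℝ) : ℝ :=
  deriv p s / (μ * s)

def derivDfun (p : ℝ → ℝ) (μ a b ρp φp r : ℝ) : ℝ :=
  -(Hfun p μ a b ρp φp r / √(Gfun p μ a b ρp φp r)) +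
    √(Gfun p μ a b ρp φp r) * deriv (Fderiv p μ) r / Fderiv p μ r ^ 2

section

variable {p : ℝ → ℝ} {μ a b ρp φp : ℝ}

theorem contDiffOn_Fderiv (hμ : μ ≠ 0) (hp : ContDiffOn ℝ 2 p (Ioi 0)) :
    ContDiffOn ℝ 1 (Fderiv p μ) (Ioi 0) :=
  (hp.deriv_of_isOpen isOpen_Ioi (by norm_num)).div (contDiffOn_const.mul contDiffOn_id)
    fun x hx => mul_ne_zero hμ (ne_of_gt hx)

theorem lt_mul_Fderiv (hμ : 0 < μ) (hb : 0 < b)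
    (hp : ∀ ρ : ℝ, 0 < ρ → a * μ / b * ρ < deriv p ρ) {x : ℝ} (hx : 0 < x) :
    a < b * Fderiv p μ x := by
  rw [Fderiv, ← div_lt_iff₀' hb, lt_div_iff₀ (mul_pos hμ hx)]
  calc a / b * (μ * x) = a * μ / b * x := by ring
    _ < deriv p x := hp x hx

theorem hasDerivAt_Ffun (hf : ContinuousOn (Fderiv p μ) (Ioi 0)) (hρp : 0 < ρp) {x : ℝ}
    (hx : 0 < x) : HasDerivAt (Ffun p μ ρp) (Fderiv p μ x) x :=
  hasDerivAt_integral_of_continuousOn isOpen_Ioi ordConnected_Ioi hf hρp hx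

theorem hasDerivAt_Hfun (hf : ContinuousOn (Fderiv p μ) (Ioi 0)) (hρp : 0 < ρp) {x : ℝ}
    (hx : 0 < x) : HasDerivAt (Hfun p μ a b ρp φp) (b * Fderiv p μ x - a) x := by
  have h := (((hasDerivAt_Ffun hf hρp hx).const_mul b).add_const (b * φp)).sub
    ((hasDerivAt_id x).const_mul a)
  exact h.congr_deriv (by ring)

theorem Hfun_self (h : a * ρp = b * φp) : Hfun p μ a b ρp φp ρp = 0 := by
  simp [Hfun, Ffun, h]

theorem hasDerivAt_Gfun (hf : ContinuousOn (Fderiv p μ) (Ioi 0)) (hρp : 0 < ρp) {x : ℝ}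
    (hx : 0 < x) :
    HasDerivAt (Gfun p μ a b ρp φp) (2 * Fderiv p μ x * Hfun p μ a b ρp φp x) x :=
  hasDerivAt_integral_of_continuousOn isOpen_Ioi ordConnected_Ioi
    ((continuousOn_const.mul hf).mul
      fun _ hy => (hasDerivAt_Hfun hf hρp hy).continuousAt.continuousWithinAt) hρp hx

theorem Hfun_pos (hf : ContinuousOn (Fderiv p μ) (Ioi 0)) (hρp : 0 < ρp)
    (hcomp : a * ρp = b * φp) (hbf : ∀ x, 0 < x → a < b * Fderiv p μ x) {x : ℝ} (hx : ρp < x) :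
    0 < Hfun p μ a b ρp φp x :=
  pos_of_hasDerivAt_pos (fun _ hy => hasDerivAt_Hfun hf hρp (hρp.trans_le hy))
    (fun y hy => sub_pos.2 (hbf y (hρp.trans hy))) (Hfun_self hcomp) hx

theorem Gfun_pos (hf : ContinuousOn (Fderiv p μ) (Ioi 0)) (hρp : 0 < ρp)
    (hcomp : a * ρp = b * φp) (hbf : ∀ x, 0 < x → a < b * Fderiv p μ x)
    (hf0 : ∀ x, 0 < x → 0 < Fderiv p μ x) {x : ℝ} (hx : ρp < x) : 0 < Gfun p μ a b ρp φp x :=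
  pos_of_hasDerivAt_pos (fun _ hy => hasDerivAt_Gfun hf hρp (hρp.trans_le hy))
    (fun _ hy => mul_pos (mul_pos two_pos (hf0 _ (hρp.trans hy))) (Hfun_pos hf hρp hcomp hbf hy))
    intervalIntegral.integral_same hx

theorem lt_of_Ffun_pos (hf : ContinuousOn (Fderiv p μ) (Ioi 0)) (hρp : 0 < ρp)
    (hf0 : ∀ x, 0 < x → 0 < Fderiv p μ x) {ρ : ℝ} (hρ : 0 < ρ) (h : 0 < Ffun p μ ρp ρ) :
    ρp < ρ := by
  have hmono : StrictMonoOn (Ffun p μ ρp) (Ioi 0) :=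
    strictMonoOn_of_hasDerivAt_pos (convex_Ioi 0) (fun x hx => hasDerivAt_Ffun hf hρp hx)
      (by rw [interior_Ioi]; exact hf0)
  rwa [← hmono.lt_iff_lt hρp hρ, Ffun, intervalIntegral.integral_same]

theorem continuousAt_Dfun (hf : ContinuousOn (Fderiv p μ) (Ioi 0)) (hρp : 0 < ρp) {x : ℝ}
    (hx : 0 < x) (hfx : Fderiv p μ x ≠ 0) : ContinuousAt (Dfun p μ a b ρp φp) x :=
  (hasDerivAt_Gfun hf hρp hx).continuousAt.sqrt.neg.div (hf.continuousAt (Ioi_mem_nhds hx)) hfx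

theorem hasDerivAt_Dfun (hf : ContDiffOn ℝ 1 (Fderiv p μ) (Ioi 0)) (hρp : 0 < ρp)
    (hcomp : a * ρp = b * φp) (hbf : ∀ x, 0 < x → a < b * Fderiv p μ x)
    (hf0 : ∀ x, 0 < x → 0 < Fderiv p μ x) {x : ℝ} (hx : ρp < x) :
    HasDerivAt (Dfun p μ a b ρp φp) (derivDfun p μ a b ρp φp x) x := by
  have hx0 : 0 < x := hρp.trans hx
  exact (hasDerivAt_Gfun hf.continuousOn hρp hx0).neg_sqrt_div
    ((hf.differentiableOn one_ne_zero).differentiableAt (Ioi_mem_nhds hx0)).hasDerivAt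
    (Gfun_pos hf.continuousOn hρp hcomp hbf hf0 hx) (hf0 x hx0).ne'

theorem continuousOn_derivDfun (hf : ContDiffOn ℝ 1 (Fderiv p μ) (Ioi 0)) (hρp : 0 < ρp)
    (hcomp : a * ρp = b * φp) (hbf : ∀ x, 0 < x → a < b * Fderiv p μ x)
    (hf0 : ∀ x, 0 < x → 0 < Fderiv p μ x) :
    ContinuousOn (derivDfun p μ a b ρp φp) (Ioi ρp) := by
  intro x hx
  have hx0 : 0 < x := hρp.trans hx
  have hG := (hasDerivAt_Gfun (a := a) (b := b) (φp := φp) hf.continuousOn hρp hx0).continuousAt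
  have hsqrtG : √(Gfun p μ a b ρp φp x) ≠ 0 :=
    (Real.sqrt_pos.2 (Gfun_pos hf.continuousOn hρp hcomp hbf hf0 hx)).ne'
  refine ContinuousAt.continuousWithinAt ?_
  exact (((hasDerivAt_Hfun hf.continuousOn hρp hx0).continuousAt.div hG.sqrt hsqrtG).neg.add
    ((hG.sqrt.mul ((hf.continuousOn_deriv_of_isOpen isOpen_Ioi le_rfl).continuousAt
      (Ioi_mem_nhds hx0))).div ((hf.continuousOn.continuousAt (Ioi_mem_nhds hx0)).pow 2)
      (pow_ne_zero 2 (hf0 x hx0).ne')))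

theorem tendsto_derivDfun (hf : ContDiffOn ℝ 1 (Fderiv p μ) (Ioi 0)) (hρp : 0 < ρp)
    (hcomp : a * ρp = b * φp) (hbf : ∀ x, 0 < x → a < b * Fderiv p μ x)
    (hf0 : ∀ x, 0 < x → 0 < Fderiv p μ x) :
    Tendsto (derivDfun p μ a b ρp φp) (𝓝[>] ρp)
      (𝓝 (-√((b * Fderiv p μ ρp - a) / Fderiv p μ ρp))) := by
  have hfc : ContinuousAt (Fderiv p μ) ρp := hf.continuousOn.continuousAt (Ioi_mem_nhds hρp)
  have hH := tendsto_div_sqrt_of_hasDerivAt (lt_add_one ρp)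
    (fun x hx => hasDerivAt_Hfun hf.continuousOn hρp (hρp.trans_le hx.1))
    (fun x hx => hasDerivAt_Gfun hf.continuousOn hρp (hρp.trans_le hx.1)) (Hfun_self hcomp)
    intervalIntegral.integral_same (fun x hx => Hfun_pos hf.continuousOn hρp hcomp hbf hx.1)
    (fun x hx => hf0 x (hρp.trans hx.1)) ((continuousAt_const.mul hfc).sub continuousAt_const)
    hfc (hf0 ρp hρp).ne'
  have hG0 : Gfun p μ a b ρp φp ρp = 0 := intervalIntegral.integral_same
  have hrest : Tendsto (fun r => √(Gfun p μ a b ρp φp r) * deriv (Fderiv p μ) r / Fderiv p μ r ^ 2)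
      (𝓝[>] ρp) (𝓝 0) := by
    have hcont : ContinuousAt
        (fun r => √(Gfun p μ a b ρp φp r) * deriv (Fderiv p μ) r / Fderiv p μ r ^ 2) ρp :=
      ((hasDerivAt_Gfun hf.continuousOn hρp hρp).continuousAt.sqrt.mul
        ((hf.continuousOn_deriv_of_isOpen isOpen_Ioi le_rfl).continuousAt
          (Ioi_mem_nhds hρp))).div (hfc.pow 2) (pow_ne_zero 2 (hf0 ρp hρp).ne')
    simpa only [hG0, Real.sqrt_zero, zero_mul, zero_div] using
      hcont.tendsto.mono_left nhdsWithin_le_nhds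
  have h := hH.neg.add hrest
  rw [add_zero] at h
  exact h

end

theorem stmt8_general (p : ℝ → ℝ) (μ a b ρp φp φm ρm : ℝ)
    (hμ : 0 < μ) (ha : 0 < a) (hb : 0 < b)
    (hp3 : ContDiffOn ℝ 3 p (Set.Ioi 0))
    (hp' : ∀ ρ : ℝ, 0 < ρ → a * μ / b * ρ < deriv p ρ)
    (hρp : 0 < ρp) (hcomp : a * ρp = b * φp)
    (hφ : φp < φm)
    (hρm : 0 < ρm) (hFρm : Ffun p μ ρp ρm = φm - φp) :
    ρp < ρm ∧
    (∃ K : NNReal, LipschitzOnWith K (Dfun p μ a b ρp φp) (Set.Icc ρp ρm)) ∧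
    (∀ r ∈ Set.Ioc ρp ρm, DifferentiableAt ℝ (Dfun p μ a b ρp φp) r) ∧
    HasDerivWithinAt (Dfun p μ a b ρp φp)
      (- Real.sqrt ((b * (deriv p ρp / (μ * ρp)) - a) / (deriv p ρp / (μ * ρp))))
      (Set.Ici ρp) ρp ∧
    Tendsto (deriv (Dfun p μ a b ρp φp)) (nhdsWithin ρp (Set.Ioi ρp))
      (nhds (- Real.sqrt ((b * (deriv p ρp / (μ * ρp)) - a) / (deriv p ρp / (μ * ρp))))) ∧
    (∃ g : ℝ → ℝ, ContinuousOn g (Set.Icc ρp ρm) ∧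
      Set.EqOn g (deriv (Dfun p μ a b ρp φp)) (Set.Ioc ρp ρm)) := by
  set D := Dfun p μ a b ρp φp
  set L := -√((b * Fderiv p μ ρp - a) / Fderiv p μ ρp)
  have hf : ContDiffOn ℝ 1 (Fderiv p μ) (Ioi 0) :=
    contDiffOn_Fderiv hμ.ne' (hp3.of_le (by norm_num))
  have hbf : ∀ x, 0 < x → a < b * Fderiv p μ x := fun x hx => lt_mul_Fderiv hμ hb hp' hx
  have hf0 : ∀ x, 0 < x → 0 < Fderiv p μ x := fun x hx =>
    pos_of_mul_pos_right (ha.trans (hbf x hx)) hb.le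
  have hρpm : ρp < ρm := lt_of_Ffun_pos hf.continuousOn hρp hf0 hρm (by linarith)
  have hD (x : ℝ) (hx : x ∈ Ioi ρp) : HasDerivAt D (derivDfun p μ a b ρp φp x) x :=
    hasDerivAt_Dfun hf hρp hcomp hbf hf0 hx
  have hlim := tendsto_derivDfun hf hρp hcomp hbf hf0
  have hlim' : Tendsto (deriv D) (𝓝[>] ρp) (𝓝 L) :=
    hlim.congr' (eventually_nhdsWithin_of_forall fun x hx => (hD x hx).deriv.symm)
  have hright : HasDerivWithinAt D L (Ici ρp) ρp :=
    hasDerivWithinAt_Ici_of_tendsto_deriv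
      (fun x hx => (hD x hx).differentiableAt.differentiableWithinAt)
      (continuousAt_Dfun hf.continuousOn hρp hρp (hf0 ρp hρp).ne').continuousWithinAt
      self_mem_nhdsWithin hlim'
  set g := Function.update (derivDfun p μ a b ρp φp) ρp L
  have hg : ContinuousOn g (Icc ρp ρm) := continuousOn_update_Icc_of_tendsto
    ((continuousOn_derivDfun hf hρp hcomp hbf hf0).mono Ioc_subset_Ioi_self) hlim
  have hgD : EqOn g (deriv D) (Ioc ρp ρm) := fun x hx =>
    (Function.update_of_ne hx.1.ne' _ _).trans (hD x hx.1).deriv.symm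
  have hDg (x : ℝ) (hx : x ∈ Icc ρp ρm) : HasDerivWithinAt D (g x) (Icc ρp ρm) x := by
    rcases hx.1.eq_or_lt with rfl | hx'
    · simpa [g] using hright.mono Icc_subset_Ici_self
    · rw [hgD ⟨hx', hx.2⟩]
      exact (hD x hx').differentiableAt.hasDerivAt.hasDerivWithinAt
  exact ⟨hρpm, exists_lipschitzOnWith_of_hasDerivWithinAt (convex_Icc _ _) isCompact_Icc hDg hg,
    fun r hr => (hD r hr.1).differentiableAt, hright, hlim', g, hg, hgD⟩

/-- When `φ₋ > φ₊` (so `ρ₋ > ρ₊`), the map `𝒟(r) = -√(G(r))/F'(r)` is Lipschitz on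
`[ρ₊, ρ₋]`: it is differentiable on `(ρ₊, ρ₋]`, has right derivative
`-√((bF'(ρ₊) - a)/F'(ρ₊))` at `ρ₊`, `𝒟'(r)` tends to this value as `r → ρ₊⁺`, and `𝒟'`
extends continuously to `[ρ₊, ρ₋]`. -/
theorem stmt8 (p : ℝ → ℝ) (μ a b ρp φp φm ρm : ℝ)
    (hμ : 0 < μ) (ha : 0 < a) (hb : 0 < b)
    (hp3 : ContDiffOn ℝ 3 p (Set.Ioi 0))
    (hp' : ∀ ρ : ℝ, 0 < ρ → a * μ / b * ρ < deriv p ρ)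
    (hρp : 0 < ρp) (hφp : 0 < φp) (hcomp : a * ρp = b * φp)
    (hφ : φp < φm) (hint : CondPlus p μ ρp φp φm)
    (hρm : 0 < ρm) (hFρm : Ffun p μ ρp ρm = φm - φp) :
    ρp < ρm ∧
    (∃ K : NNReal, LipschitzOnWith K (Dfun p μ a b ρp φp) (Set.Icc ρp ρm)) ∧
    (∀ r ∈ Set.Ioc ρp ρm, DifferentiableAt ℝ (Dfun p μ a b ρp φp) r) ∧
    HasDerivWithinAt (Dfun p μ a b ρp φp)
      (- Real.sqrt ((b * (deriv p ρp / (μ * ρp)) - a) / (deriv p ρp / (μ * ρp))))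
      (Set.Ici ρp) ρp ∧
    Tendsto (deriv (Dfun p μ a b ρp φp)) (nhdsWithin ρp (Set.Ioi ρp))
      (nhds (- Real.sqrt ((b * (deriv p ρp / (μ * ρp)) - a) / (deriv p ρp / (μ * ρp))))) ∧
    (∃ g : ℝ → ℝ, ContinuousOn g (Set.Icc ρp ρm) ∧
      Set.EqOn g (deriv (Dfun p μ a b ρp φp)) (Set.Ioc ρp ρm)) :=
  stmt8_general p μ a b ρp φp φm ρm hμ ha hb hp3 hp' hρp hcomp hφ hρm hFρm

end
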